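/- Let A' be a commutative ring, J' ⊆ A' an ideal, B' := A'/J' with quotient map g : A' → B', let f : B → B' be a homomorphism of commutative rings, and let A := B ×_{B'} A' be the fiber product ring. If B' is finitely generated as a B-module via f (i.e., f is a finite ring homomorphism), then A' is finitely generated as an A-module via the second projection pr₂ : A → A'. -/

import Mathlib

/-- The fiber product ring `B ×_{B'} A'` of two ring homomorphisms `f : B →+* B'` and
`g : A' →+* B'`, realized as the subring `{(b, a') | f b = g a'}` of `B × A'`. -/
def fiberProd {B A' B' : Type*} [CommRing B] [CommRing A'] [CommRing B']
    (f : B →+* B') (g : A' →+* B') : Subring (B × A') :=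
  RingHom.eqLocus (f.comp (RingHom.fst B A')) (g.comp (RingHom.snd B A'))

/-- The second projection `pr₂ : B ×_{B'} A' →+* A'`. -/
def fiberProdSnd {B A' B' : Type*} [CommRing B] [CommRing A'] [CommRing B']
    (f : B →+* B') (g : A' →+* B') : fiberProd f g →+* A' :=
  (RingHom.snd B A').comp (fiberProd f g).subtype

/-!
Since `g` is onto, the fiber condition `f b = g a'` can be met for every `b`, so `pr₁` is onto
and `g ∘ pr₂ = f ∘ pr₁` is finite. Lifting `A`-module generators of `B'` along `g` therefore
gives elements of `A'` spanning it modulo `ker g`, and `ker g` is spanned by `1`, because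
`(0, j)` lies in the fiber product for every `j ∈ ker g`.
-/

theorem Module.Finite.of_surjective_of_ker_le_fg {R M N : Type*} [CommRing R]
    [AddCommGroup M] [Module R M] [AddCommGroup N] [Module R N] [Module.Finite R N]
    (g : M →ₗ[R] N) (hg : Function.Surjective g) {K : Submodule R M} (hK : K.FG)
    (hker : LinearMap.ker g ≤ K) : Module.Finite R M := by
  obtain ⟨s, hs⟩ := Module.Finite.fg_top (R := R) (M := N)
  set P := Submodule.span R (Function.surjInv hg '' s)
  have hP : P.FG := Submodule.fg_def.2 ⟨_, s.finite_toSet.image _, rfl⟩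
  have hmap : P.map g = ⊤ := by
    rw [Submodule.map_span, ← Set.image_comp, Function.comp_surjInv hg, Set.image_id, hs]
  have htop : P ⊔ K = ⊤ := top_unique <|
    calc ⊤ = (P.map g).comap g := by rw [hmap, Submodule.comap_top]
      _ = P ⊔ LinearMap.ker g := Submodule.comap_map_eq g P
      _ ≤ P ⊔ K := sup_le_sup_left hker P
  exact ⟨htop ▸ hP.sup hK⟩

theorem RingHom.Finite.of_comp_of_surjective_of_ker_le_range {A A' B' : Type*} [CommRing A]
    [CommRing A'] [CommRing B'] (φ : A →+* A') (g : A' →+* B') (hg : Function.Surjective g)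
    (hker : ∀ x ∈ RingHom.ker g, x ∈ φ.range) (h : (g.comp φ).Finite) : φ.Finite := by
  let _ : Algebra A A' := φ.toAlgebra
  let _ : Algebra A B' := (g.comp φ).toAlgebra
  have : Module.Finite A B' := h
  let gA : A' →ₐ[A] B' := { g with commutes' := fun _ ↦ rfl }
  refine Module.Finite.of_surjective_of_ker_le_fg gA.toLinearMap hg
    (Submodule.fg_span_singleton 1) fun x hx ↦ ?_
  obtain ⟨a, rfl⟩ := hker x hx
  exact Submodule.mem_span_singleton.2 ⟨a, Algebra.smul_def a 1 |>.trans (mul_one _)⟩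

section FiberProd

variable {B A' B' : Type*} [CommRing B] [CommRing A'] [CommRing B'] (f : B →+* B') (g : A' →+* B')

def fiberProdFst : fiberProd f g →+* B :=
  (RingHom.fst B A').comp (fiberProd f g).subtype

theorem comp_fiberProdFst : f.comp (fiberProdFst f g) = g.comp (fiberProdSnd f g) :=
  RingHom.ext fun x ↦ x.2

theorem fiberProdFst_surjective (hg : Function.Surjective g) :
    Function.Surjective (fiberProdFst f g) := fun b ↦
  let ⟨a', ha'⟩ := hg (f b)
  ⟨⟨(b, a'), ha'.symm⟩, rfl⟩

theorem ker_le_range_fiberProdSnd : ∀ x ∈ RingHom.ker g, x ∈ (fiberProdSnd f g).range :=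
  fun x hx ↦ ⟨⟨(0, x), (map_zero f).trans (RingHom.mem_ker.1 hx).symm⟩, rfl⟩

theorem fiberProdSnd_finite (hg : Function.Surjective g) (hf : f.Finite) :
    (fiberProdSnd f g).Finite := by
  refine RingHom.Finite.of_comp_of_surjective_of_ker_le_range _ g hg
    (ker_le_range_fiberProdSnd f g) ?_
  rw [← comp_fiberProdFst]
  exact hf.comp (RingHom.Finite.of_surjective _ (fiberProdFst_surjective f g hg))

end FiberProd

theorem stmt1 {B A' : Type*} [CommRing B] [CommRing A'] (J' : Ideal A')
    (f : B →+* A' ⧸ J') (hf : f.Finite) :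
    (fiberProdSnd f (Ideal.Quotient.mk J')).Finite :=
  fiberProdSnd_finite f _ Ideal.Quotient.mk_surjective hf
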